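/- The function z ↦ ∑_{n=1}^∞ ∫_0^1 t/(n+t)^{z+1} dt is holomorphic on the half-plane {z : Re(z) > 0}. -/

import Mathlib

/-!
Each term `∫₀¹ t (n+1+t)^{-(z+1)} dt` is entire, by differentiation under the integral sign, and on
`Re z > σ > 0` it is bounded by `(n+1)^{-(σ+1)}`, which is summable. Uniform limits of holomorphic
functions are holomorphic, and every point of the half-plane lies in such a smaller half-plane.
-/

open Complex Metric Set intervalIntegral

theorem differentiable_intervalIntegral_mul_cexp_mul {f c : ℝ → ℂ} {a b : ℝ}
    (hf : ContinuousOn f (uIcc a b)) (hc : ContinuousOn c (uIcc a b)) :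
    Differentiable ℂ fun w : ℂ => ∫ t in a..b, f t * cexp (w * c t) := by
  intro w₀
  obtain ⟨Mf, hMf⟩ := isCompact_uIcc.exists_bound_of_continuousOn hf
  obtain ⟨Mc, hMc⟩ := isCompact_uIcc.exists_bound_of_continuousOn hc
  have hcont : ∀ w : ℂ, ContinuousOn (fun t => f t * cexp (w * c t)) (uIcc a b) := fun w =>
    hf.mul (continuous_exp.comp_continuousOn (continuousOn_const.mul hc))
  have hcont_deriv : ContinuousOn (fun t => f t * (cexp (w₀ * c t) * c t)) (uIcc a b) :=
    hf.mul ((continuous_exp.comp_continuousOn (continuousOn_const.mul hc)).mul hc)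
  have hderiv_le : ∀ t ∈ uIoc a b, ∀ w ∈ ball w₀ 1,
      ‖f t * (cexp (w * c t) * c t)‖ ≤ Mf * (Real.exp ((‖w₀‖ + 1) * Mc) * Mc) := by
    intro t ht w hw
    have ht' := uIoc_subset_uIcc ht
    have hw' : ‖w‖ ≤ ‖w₀‖ + 1 := by
      have := norm_le_norm_add_norm_sub' w w₀
      rw [mem_ball, dist_eq_norm] at hw
      linarith
    have hexp : ‖cexp (w * c t)‖ ≤ Real.exp ((‖w₀‖ + 1) * Mc) :=
      (norm_exp_le_exp_norm _).trans <| Real.exp_le_exp.mpr <| by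
        rw [norm_mul]; exact mul_le_mul hw' (hMc t ht') (norm_nonneg _) (by positivity)
    rw [norm_mul, norm_mul]
    exact mul_le_mul (hMf t ht') (mul_le_mul hexp (hMc t ht') (norm_nonneg _) (by positivity))
      (by positivity) ((norm_nonneg _).trans (hMf t ht'))
  refine (hasDerivAt_integral_of_dominated_loc_of_deriv_le (ball_mem_nhds w₀ one_pos)
    (.of_forall fun w => ((hcont w).mono uIoc_subset_uIcc).aestronglyMeasurable measurableSet_uIoc)
    (hcont w₀).intervalIntegrable
    ((hcont_deriv.mono uIoc_subset_uIcc).aestronglyMeasurable measurableSet_uIoc)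
    (.of_forall hderiv_le) intervalIntegrable_const
    (.of_forall fun t _ w _ => ((hasDerivAt_mul_const (c t)).cexp.const_mul (f t)))).2.differentiableAt

theorem norm_cexp_neg_mul_log_le {w : ℂ} {σ x u : ℝ} (hσ : 0 ≤ σ) (hw : σ ≤ w.re) (hx : 1 ≤ x)
    (hxu : x ≤ u) : ‖cexp (-w * Real.log u)‖ ≤ x ^ (-σ) := by
  have hlogx : 0 ≤ Real.log x := Real.log_nonneg hx
  have hlog : Real.log x ≤ Real.log u := Real.log_le_log (by linarith) hxu
  have hre : (-w * (Real.log u : ℂ)).re = -w.re * Real.log u := by simp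
  calc ‖cexp (-w * Real.log u)‖ = Real.exp (-w.re * Real.log u) := by rw [norm_exp, hre]
    _ ≤ Real.exp (-σ * Real.log x) := Real.exp_le_exp.mpr (by nlinarith)
    _ = x ^ (-σ) := by rw [Real.rpow_def_of_pos (by linarith), mul_comm]

theorem norm_integral_mul_cexp_neg_mul_log_add_le {w : ℂ} {σ x : ℝ} (hσ : 0 ≤ σ)
    (hw : σ ≤ w.re) (hx : 1 ≤ x) :
    ‖∫ t in (0 : ℝ)..1, (t : ℂ) * cexp (-w * Real.log (x + t))‖ ≤ x ^ (-σ) := by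
  have hpointwise : ∀ t ∈ uIoc (0 : ℝ) 1, ‖(t : ℂ) * cexp (-w * Real.log (x + t))‖ ≤ x ^ (-σ) := by
    intro t ht
    rw [uIoc_of_le zero_le_one] at ht
    rw [norm_mul, norm_real, Real.norm_of_nonneg ht.1.le]
    exact (mul_le_of_le_one_left (norm_nonneg _) ht.2).trans
      (norm_cexp_neg_mul_log_le hσ hw hx (by linarith [ht.1]))
  simpa using norm_integral_le_of_norm_le_const hpointwise

theorem stmt_6 :
    DifferentiableOn ℂ
      (fun z : ℂ => ∑' n : ℕ, ∫ t in (0:ℝ)..1,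
        (t : ℂ) * Complex.exp (-(z + 1) * Real.log ((n + 1 : ℕ) + t)))
      {z : ℂ | 0 < z.re} := by
  have hterm (n : ℕ) : Differentiable ℂ fun z : ℂ => ∫ t in (0:ℝ)..1,
      (t : ℂ) * cexp (-(z + 1) * Real.log ((n + 1 : ℕ) + t)) := by
    have hlog : ContinuousOn (fun t : ℝ => Real.log ((n + 1 : ℕ) + t)) (uIcc 0 1) :=
      ContinuousOn.log (by fun_prop) fun t ht => by
        rw [uIcc_of_le zero_le_one] at ht; positivity [ht.1]
    exact (differentiable_intervalIntegral_mul_cexp_mul (by fun_prop)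
      (continuous_ofReal.comp_continuousOn hlog)).comp (by fun_prop)
  intro z hz
  set σ := z.re / 2
  have hσ : 0 < σ := half_pos hz
  have hU : IsOpen {w : ℂ | σ < w.re} := isOpen_lt continuous_const continuous_re
  have hsum : Summable fun n : ℕ => ((n + 1 : ℕ) : ℝ) ^ (-(σ + 1)) :=
    (summable_nat_add_iff 1).mpr (Real.summable_nat_rpow.mpr (by linarith))
  have hdiff := differentiableOn_tsum_of_summable_norm hsum (fun n => (hterm n).differentiableOn)
    hU fun n w hw => norm_integral_mul_cexp_neg_mul_log_add_le (by positivity)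
      (by simp only [add_re, one_re]; linarith [hw.out]) (by simp)
  exact (hdiff.differentiableAt (hU.mem_nhds (show σ < z.re from half_lt_self hz))).differentiableWithinAt
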